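/- Let n ≥ 3 be a prime power. Then there exist vectors u^(1), ..., u^(n+1) ∈ ℝ^(n+1), each with coordinate sum zero and with u^(i)_i = 0 and u^(i)_(n+1) = 0 for every i, such that for all i ≠ j the n - 1 coordinates of u^(i) - u^(j) with indices outside {i, j} are uniformly distributed modulo 1, i.e., their multiset of fractional parts equals {c, c + 1/(n-1), ..., c + (n-2)/(n-1)} modulo 1 for some real number c. -/

import Mathlib

/-!
Let `F` be the field with `n` elements, identify `Fin (n + 1)` with the projective line
`F ∪ {∞}` (the last index being `∞`) and let `log : Fˣ ≃ ZMod (n - 1)` be a discrete logarithm.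
Put `u⁽ⁱ⁾_k = log (k - i) / (n - 1) - (n - 2) / (2 (n - 1))` for finite `i ≠ k` and `0` otherwise;
the constant makes each row sum to zero. Modulo `1` and up to a constant, `u⁽ⁱ⁾_k - u⁽ʲ⁾_k` is
`log ((k - i) / (k - j)) / (n - 1)`, and the Möbius map `k ↦ (k - i) / (k - j)` sends the
projective line minus `{i, j}` bijectively onto `Fˣ`; when `i` or `j` is `∞` the same holds with
`k ↦ k - i` or `k ↦ (k - j)⁻¹`.
-/

open Function

namespace ZMod

variable {m : ℕ} [NeZero m]

theorem exists_val_sub_div_eq (a b : ZMod m) :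
    ∃ t : ℤ, ((a.val : ℝ) - b.val) / m = ((a - b).val : ℝ) / m + t := by
  have hval := ZMod.val_add (a - b) b
  rw [sub_add_cancel] at hval
  have hdiv := Nat.mod_add_div ((a - b).val + b.val) m
  rw [← hval] at hdiv
  set q := ((a - b).val + b.val) / m
  refine ⟨-q, ?_⟩
  have hm : (m : ℝ) ≠ 0 := NeZero.ne _
  field_simp
  have := congrArg (Nat.cast : ℕ → ℝ) hdiv
  push_cast at this ⊢
  linarith

theorem sum_val_cast : ∑ z : ZMod m, (z.val : ℝ) = m * (m - 1) / 2 := by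
  obtain ⟨k, rfl⟩ := Nat.exists_eq_succ_of_ne_zero (NeZero.ne m)
  have hgauss := congrArg (Nat.cast : ℕ → ℝ) (Finset.sum_range_id_mul_two (k + 1))
  push_cast at hgauss
  rw [← Fin.sum_univ_eq_sum_range] at hgauss
  rw [eq_div_iff two_ne_zero]
  convert hgauss using 1
  · rfl
  · push_cast; ring

theorem val_finEquiv_symm (z : ZMod m) : ((finEquiv m).symm z : ℕ) = z.val := by
  obtain ⟨k, rfl⟩ := Nat.exists_eq_succ_of_ne_zero (NeZero.ne m)
  rfl

end ZMod

theorem Fintype.card_subtype_ne_and_ne {α : Type*} [Fintype α] [DecidableEq α] {a b : α}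
    (hab : a ≠ b) : Fintype.card {k // k ≠ a ∧ k ≠ b} = Fintype.card α - 2 := by
  rw [Fintype.card_subtype, show Finset.univ.filter (fun k => k ≠ a ∧ k ≠ b) = Finset.univ \ {a, b}
    by ext; simp, Finset.card_univ_sdiff, Finset.card_pair hab]

section Shifts

variable {ι : Type*} [DecidableEq ι] {m : ℕ} [NeZero m]

/-- `(m - 1) / (2m)` is the mean of `z.val / m` over `z : ZMod m`. -/
noncomputable def rowOffset (m : ℕ) (o i : ι) : ℝ :=
  if i = o then 0 else ((m : ℝ) - 1) / (2 * m)

noncomputable def shiftVectors (o : ι) (G : ι → ι → ZMod m) (i k : ι) : ℝ :=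
  if k = i ∨ k = o then 0 else (G i k).val / m - rowOffset m o i

variable {o : ι} {G : ι → ι → ZMod m}

theorem sum_shiftVectors [Fintype ι] (hrow : ∀ k, G o k = 0)
    (hbij : ∀ i, i ≠ o → Bijective fun k : {k // k ≠ i ∧ k ≠ o} => G i k) (i : ι) :
    ∑ k, shiftVectors o G i k = 0 := by
  by_cases hi : i = o
  · simp [shiftVectors, rowOffset, hi, hrow]
  have hm : (m : ℝ) ≠ 0 := NeZero.ne _
  simp only [shiftVectors, rowOffset, hi, if_false]
  rw [Finset.sum_ite, Finset.sum_const_zero, zero_add,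
    Finset.sum_subtype _ (p := fun k => k ≠ i ∧ k ≠ o) (fun k => by simp),
    Fintype.sum_bijective _ (hbij i hi) _
      (fun z : ZMod m => (z.val : ℝ) / m - ((m : ℝ) - 1) / (2 * m)) (fun _ => rfl),
    Finset.sum_sub_distrib, ← Finset.sum_div, ZMod.sum_val_cast, Finset.sum_const,
    Finset.card_univ, ZMod.card, nsmul_eq_mul]
  field_simp
  ring

theorem shiftVectors_sub (hrow : ∀ k, G o k = 0) (hcol : ∀ i, G i o = 0) {i j k : ι}
    (hki : k ≠ i) (hkj : k ≠ j) :
    shiftVectors o G i k - shiftVectors o G j k =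
      rowOffset m o j - rowOffset m o i + (((G i k).val : ℝ) - (G j k).val) / m := by
  unfold shiftVectors rowOffset
  split_ifs <;> simp_all <;> ring

theorem exists_shifts_of_bijective_sub [Fintype ι] (hrow : ∀ k, G o k = 0)
    (hcol : ∀ i, G i o = 0)
    (hbij : ∀ i j, i ≠ j → Bijective fun k : {k // k ≠ i ∧ k ≠ j} => G i k - G j k) :
    ∃ u : ι → ι → ℝ, (∀ i, ∑ k, u i k = 0) ∧ (∀ i, u i i = 0) ∧ (∀ i, u i o = 0) ∧
      ∀ i j, i ≠ j → ∃ c : ℝ, ∃ e : {k // k ≠ i ∧ k ≠ j} ≃ Fin m,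
        ∀ k : {k // k ≠ i ∧ k ≠ j}, ∃ t : ℤ, u i k - u j k = c + ((e k : ℕ) : ℝ) / m + t := by
  refine ⟨shiftVectors o G, sum_shiftVectors hrow fun i hi => by simpa [hrow] using hbij i o hi,
    fun i => if_pos (.inl rfl), fun i => if_pos (.inr rfl), fun i j hij => ?_⟩
  refine ⟨rowOffset m o j - rowOffset m o i,
    (Equiv.ofBijective _ (hbij i j hij)).trans (ZMod.finEquiv m).symm.toEquiv, fun k => ?_⟩
  obtain ⟨t, ht⟩ := ZMod.exists_val_sub_div_eq (G i k) (G j k)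
  refine ⟨t, ?_⟩
  rw [shiftVectors_sub hrow hcol k.2.1 k.2.2, add_assoc, ht]
  simp only [Equiv.trans_apply, Equiv.ofBijective_apply, RingEquiv.toEquiv_eq_coe,
    EquivLike.coe_coe, ZMod.val_finEquiv_symm]

end Shifts

section ProjectiveLine

variable {F : Type*} [Field F] {m : ℕ} (ψ : Fˣ ≃* Multiplicative (ZMod m))

open scoped Classical in
noncomputable def discreteLog (x : F) : ZMod m :=
  if h : x = 0 then 0 else (ψ (Units.mk0 x h)).toAdd

theorem discreteLog_mul {x y : F} (hx : x ≠ 0) (hy : y ≠ 0) :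
    discreteLog ψ (x * y) = discreteLog ψ x + discreteLog ψ y := by
  simp [discreteLog, hx, hy, Units.mk0_mul]

theorem discreteLog_injOn : Set.InjOn (discreteLog ψ) ({0}ᶜ : Set F) := by
  intro x (hx : x ≠ 0) y (hy : y ≠ 0) h
  simp only [discreteLog, dif_neg hx, dif_neg hy] at h
  exact congrArg Units.val (ψ.injective (Multiplicative.toAdd.injective h))

theorem discreteLog_sub_injOn (b : F) :
    Set.InjOn (fun k => discreteLog ψ (k - b)) ({b}ᶜ : Set F) := fun _ hk _ hk' h =>
  sub_left_inj.1 (discreteLog_injOn ψ (sub_ne_zero.2 hk) (sub_ne_zero.2 hk') h)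

theorem discreteLog_sub_sub_ne_zero {a b x : F} (hab : a ≠ b) (hxa : x ≠ a) (hxb : x ≠ b) :
    discreteLog ψ (x - a) - discreteLog ψ (x - b) ≠ 0 := fun h =>
  hab (sub_right_inj.1 (discreteLog_injOn ψ (sub_ne_zero.2 hxa) (sub_ne_zero.2 hxb)
    (sub_eq_zero.1 h)))

theorem discreteLog_sub_sub_injOn {a b : F} (hab : a ≠ b) :
    Set.InjOn (fun k => discreteLog ψ (k - a) - discreteLog ψ (k - b)) ({a, b}ᶜ : Set F) := by
  intro k hk k' hk' h
  simp only [Set.mem_compl_iff, Set.mem_insert_iff, Set.mem_singleton_iff, not_or] at hk hk'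
  simp only [sub_eq_sub_iff_add_eq_add] at h
  rw [← discreteLog_mul ψ (sub_ne_zero.2 hk.1) (sub_ne_zero.2 hk'.2),
    ← discreteLog_mul ψ (sub_ne_zero.2 hk'.1) (sub_ne_zero.2 hk.2)] at h
  have hcross := discreteLog_injOn ψ (mul_ne_zero (sub_ne_zero.2 hk.1) (sub_ne_zero.2 hk'.2))
    (mul_ne_zero (sub_ne_zero.2 hk'.1) (sub_ne_zero.2 hk.2)) h
  have : (a - b) * (k - k') = 0 := by linear_combination hcross
  exact sub_eq_zero.1 ((mul_eq_zero.1 this).resolve_left (sub_ne_zero.2 hab))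

/-- `Option F` is the projective line over `F`, with `none` the point at infinity. -/
noncomputable def logDiff : Option F → Option F → ZMod m
  | some a, some k => discreteLog ψ (k - a)
  | _, _ => 0

@[simp]
theorem logDiff_none_left (k : Option F) : logDiff ψ none k = 0 := rfl

@[simp]
theorem logDiff_none_right (a : Option F) : logDiff ψ a none = 0 := by
  cases a <;> rfl

@[simp]
theorem logDiff_some_some (a k : F) : logDiff ψ (some a) (some k) = discreteLog ψ (k - a) := rfl

theorem logDiff_sub_injective {a b : Option F} (hab : a ≠ b) :
    Injective fun k : {k // k ≠ a ∧ k ≠ b} => logDiff ψ a k - logDiff ψ b k := by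
  rintro ⟨k, hka, hkb⟩ ⟨k', hka', hkb'⟩ h
  simp only [Subtype.mk.injEq]
  dsimp only at h
  rcases a with _ | a <;> rcases b with _ | b
  · exact absurd rfl hab
  · obtain ⟨k, rfl⟩ := Option.ne_none_iff_exists'.1 hka
    obtain ⟨k', rfl⟩ := Option.ne_none_iff_exists'.1 hka'
    simp only [logDiff_none_left, logDiff_some_some, zero_sub, neg_inj] at h
    simp only [ne_eq, Option.some.injEq] at hkb hkb'
    rw [discreteLog_sub_injOn ψ b hkb hkb' h]
  · obtain ⟨k, rfl⟩ := Option.ne_none_iff_exists'.1 hkb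
    obtain ⟨k', rfl⟩ := Option.ne_none_iff_exists'.1 hkb'
    simp only [logDiff_none_left, logDiff_some_some, sub_zero] at h
    simp only [ne_eq, Option.some.injEq] at hka hka'
    rw [discreteLog_sub_injOn ψ a hka hka' h]
  simp only [ne_eq, Option.some.injEq] at hab
  rcases k with _ | k <;> rcases k' with _ | k' <;>
    simp only [ne_eq, Option.some.injEq, reduceCtorEq, not_false_eq_true] at hka hkb hka' hkb' ⊢
  · simp only [logDiff_none_right, logDiff_some_some, sub_zero] at h
    exact discreteLog_sub_sub_ne_zero ψ hab hka' hkb' h.symm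
  · simp only [logDiff_none_right, logDiff_some_some, sub_zero] at h
    exact discreteLog_sub_sub_ne_zero ψ hab hka hkb h
  · exact discreteLog_sub_sub_injOn ψ hab (by simp [hka, hkb]) (by simp [hka', hkb']) h

theorem logDiff_sub_bijective [Fintype F] [NeZero m] {a b : Option F} (hab : a ≠ b) :
    Bijective fun k : {k // k ≠ a ∧ k ≠ b} => logDiff ψ a k - logDiff ψ b k := by
  classical
  refine (Fintype.bijective_iff_injective_and_card _).2 ⟨logDiff_sub_injective ψ hab, ?_⟩
  have hunits : Fintype.card F - 1 = m := by
    rw [← Fintype.card_units, Fintype.card_congr ψ.toEquiv]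
    simp
  rw [Fintype.card_subtype_ne_and_ne hab, Fintype.card_option, ZMod.card]
  omega

end ProjectiveLine

theorem exists_optimal_shifts (n : ℕ) (hn : 3 ≤ n) (hpp : IsPrimePow n) :
    ∃ u : Fin (n + 1) → (Fin (n + 1) → ℝ),
      (∀ i, ∑ k, u i k = 0) ∧
      (∀ i, u i i = 0) ∧
      (∀ i, u i (Fin.last n) = 0) ∧
      (∀ i j, i ≠ j →
        ∃ c : ℝ, ∃ e : {k : Fin (n + 1) // k ≠ i ∧ k ≠ j} ≃ Fin (n - 1),
          ∀ k : {k : Fin (n + 1) // k ≠ i ∧ k ≠ j}, ∃ m : ℤ,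
            u i k.val - u j k.val = c + (((e k : Fin (n - 1)) : ℕ) : ℝ) / ((n : ℝ) - 1) + (m : ℝ)) := by
  obtain ⟨p, κ, hp, hκ, hpκ⟩ := hpp
  have : Fact p.Prime := ⟨hp.nat_prime⟩
  let F := GaloisField p κ
  have : Fintype F := Fintype.ofFinite F
  have hcard : Fintype.card F = n := by
    rw [Fintype.card_eq_nat_card, GaloisField.card p κ hκ.ne', hpκ]
  have : NeZero (n - 1) := ⟨by omega⟩
  have hunits : Nat.card Fˣ = n - 1 := by
    rw [Nat.card_units, Nat.card_eq_fintype_card, hcard]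
  obtain ⟨ψ⟩ : Nonempty (Fˣ ≃* Multiplicative (ZMod (n - 1))) :=
    ⟨mulEquivOfCyclicCardEq (by simpa using hunits)⟩
  let σ : Fin (n + 1) ≃ Option F :=
    finSuccEquivLast.trans (Fintype.equivFinOfCardEq hcard).symm.optionCongr
  have hσ : σ (Fin.last n) = none := by simp [σ]
  obtain ⟨u, hsum, hdiag, hlast, hpair⟩ := exists_shifts_of_bijective_sub
    (o := Fin.last n) (G := fun i k => logDiff ψ (σ i) (σ k)) (by simp [hσ]) (by simp [hσ])
    fun i j hij => (logDiff_sub_bijective ψ (σ.injective.ne hij)).comp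
      (σ.subtypeEquiv fun k => by simp [σ.injective.ne_iff]).bijective
  refine ⟨u, hsum, hdiag, hlast, ?_⟩
  rwa [Nat.cast_pred (by omega)] at hpair
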